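/- For M = [[A, iA],[iA, −A]] with A an n×n complex symmetric matrix (Aᵗ = A), one has trace([M, Mᴴ]²) = 32·trace((AᴴA)²) and trace(MᴴM) = 4·trace(AᴴA); consequently −trace([M,Mᴴ]²)/(trace(MᴴM))² lies in [−2, −2/n] for all nonzero such M. -/

import Mathlib

/-!
With `P = A Aᴴ` and `Q = Aᴴ A`, a block computation gives
`[M, Mᴴ] = [[2(P - Q), -2i(P + Q)], [2i(P + Q), 2(P - Q)]]`, whose square has trace
`16 tr(P² + Q²) = 32 tr(Q²)` because `tr(P²) = tr(Q²)`; likewise `tr(Mᴴ M) = 4 tr Q`.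
If `λᵢ ≥ 0` are the eigenvalues of `Q`, the curvature quotient is `-2 ∑ λᵢ² / (∑ λᵢ)²`, and
`∑ λᵢ² ≤ (∑ λᵢ)² ≤ n ∑ λᵢ²`.
-/

open Matrix
open scoped ComplexOrder

namespace Matrix

variable {m n : Type*} [Fintype m] [Fintype n]

theorem trace_fromBlocks {R : Type*} [AddCommMonoid R] (A : Matrix m m R) (B : Matrix m n R)
    (C : Matrix n m R) (D : Matrix n n R) :
    (fromBlocks A B C D).trace = A.trace + D.trace := by
  simp [trace, Fintype.sum_sum_type]

theorem trace_mul_conjTranspose_self_sq {R : Type*} [CommSemiring R] [StarRing R]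
    (A : Matrix m n R) :
    (A * Aᴴ * (A * Aᴴ)).trace = (Aᴴ * A * (Aᴴ * A)).trace := by
  rw [show A * Aᴴ * (A * Aᴴ) = A * (Aᴴ * A * Aᴴ) by simp only [Matrix.mul_assoc],
    trace_mul_comm, Matrix.mul_assoc, Matrix.mul_assoc]

section Complex

variable (A : Matrix n n ℂ)

theorem fromBlocks_I_mul_conjTranspose :
    let M := fromBlocks A (Complex.I • A) (Complex.I • A) (-A)
    M * Mᴴ = fromBlocks (2 • (A * Aᴴ)) (-Complex.I • 2 • (A * Aᴴ))
      (Complex.I • 2 • (A * Aᴴ)) (2 • (A * Aᴴ)) := by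
  intro M
  simp only [M, fromBlocks_conjTranspose, conjTranspose_smul, Complex.star_def, Complex.conj_I,
    conjTranspose_neg, fromBlocks_multiply, smul_mul_assoc, mul_smul_comm, smul_smul,
    Matrix.neg_mul, Matrix.mul_neg, fromBlocks_inj]
  refine ⟨?_, ?_, ?_, ?_⟩ <;> match_scalars <;> simp <;> ring

theorem conjTranspose_mul_fromBlocks_I :
    let M := fromBlocks A (Complex.I • A) (Complex.I • A) (-A)
    Mᴴ * M = fromBlocks (2 • (Aᴴ * A)) (Complex.I • 2 • (Aᴴ * A))
      (-Complex.I • 2 • (Aᴴ * A)) (2 • (Aᴴ * A)) := by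
  intro M
  simp only [M, fromBlocks_conjTranspose, conjTranspose_smul, Complex.star_def, Complex.conj_I,
    conjTranspose_neg, fromBlocks_multiply, smul_mul_assoc, mul_smul_comm, smul_smul,
    Matrix.neg_mul, Matrix.mul_neg, fromBlocks_inj]
  refine ⟨?_, ?_, ?_, ?_⟩ <;> match_scalars <;> simp <;> ring

theorem trace_fromBlocks_I_mul_self (X Y : Matrix n n ℂ) :
    let N := fromBlocks X (-Complex.I • Y) (Complex.I • Y) X
    (N * N).trace = 2 * (X * X + Y * Y).trace := by
  intro N
  simp only [N, fromBlocks_multiply, trace_fromBlocks, smul_mul_assoc, mul_smul_comm, smul_smul,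
    trace_add, trace_smul, smul_eq_mul]
  linear_combination (-2 * (Y * Y).trace) * Complex.I_sq

theorem trace_conjTranspose_mul_fromBlocks_I :
    let M := fromBlocks A (Complex.I • A) (Complex.I • A) (-A)
    (Mᴴ * M).trace = 4 * (Aᴴ * A).trace := by
  intro M
  rw [conjTranspose_mul_fromBlocks_I, trace_fromBlocks, trace_smul]
  ring

theorem trace_commutator_fromBlocks_I_mul_self :
    let M := fromBlocks A (Complex.I • A) (Complex.I • A) (-A)
    ((M * Mᴴ - Mᴴ * M) * (M * Mᴴ - Mᴴ * M)).trace = 32 * (Aᴴ * A * (Aᴴ * A)).trace := by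
  intro M
  set P := A * Aᴴ
  set Q := Aᴴ * A
  have hcomm : M * Mᴴ - Mᴴ * M = fromBlocks (2 • (P - Q)) (-Complex.I • 2 • (P + Q))
      (Complex.I • 2 • (P + Q)) (2 • (P - Q)) := by
    rw [fromBlocks_I_mul_conjTranspose, conjTranspose_mul_fromBlocks_I, sub_eq_add_neg,
      fromBlocks_neg, fromBlocks_add]
    congr 1 <;> module
  have hsq : 2 • (P - Q) * 2 • (P - Q) + 2 • (P + Q) * 2 • (P + Q) = 8 • (P * P + Q * Q) := by
    noncomm_ring
  rw [hcomm, trace_fromBlocks_I_mul_self, hsq, trace_smul, trace_add,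
    trace_mul_conjTranspose_self_sq]
  simp only [nsmul_eq_mul]
  ring

end Complex

section Hermitian

variable {𝕜 : Type*} [RCLike 𝕜] {A : Matrix n n 𝕜}

theorem re_trace_conjTranspose_mul_self_pos {B : Matrix m n 𝕜} (hB : B ≠ 0) :
    0 < RCLike.re (Bᴴ * B).trace := by
  have hpos : 0 < (Bᴴ * B).trace := (posSemidef_conjTranspose_mul_self B).trace_nonneg.lt_of_ne'
    (mt trace_conjTranspose_mul_self_eq_zero_iff.mp hB)
  exact (RCLike.pos_iff.mp hpos).1

variable [DecidableEq n]

theorem IsHermitian.trace_mul_self_eq_sum_sq (hA : A.IsHermitian) :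
    (A * A).trace = ∑ i, ((hA.eigenvalues i ^ 2 : ℝ) : 𝕜) := by
  conv_lhs => rw [hA.spectral_theorem, ← map_mul, Unitary.conjStarAlgAut_apply, trace_mul_cycle,
    Unitary.coe_star_mul_self, one_mul, diagonal_mul_diagonal, trace_diagonal]
  simp [sq]

theorem IsHermitian.re_trace_eq_sum (hA : A.IsHermitian) :
    RCLike.re A.trace = ∑ i, hA.eigenvalues i := by
  simp [hA.trace_eq_sum_eigenvalues]

theorem IsHermitian.re_trace_mul_self_eq_sum (hA : A.IsHermitian) :
    RCLike.re (A * A).trace = ∑ i, hA.eigenvalues i ^ 2 := by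
  rw [hA.trace_mul_self_eq_sum_sq, map_sum]
  simp only [RCLike.ofReal_re]

theorem IsHermitian.sq_re_trace_le_card_mul (hA : A.IsHermitian) :
    RCLike.re A.trace ^ 2 ≤ Fintype.card n * RCLike.re (A * A).trace := by
  rw [hA.re_trace_eq_sum, hA.re_trace_mul_self_eq_sum]
  exact sq_sum_le_card_mul_sum_sq

theorem PosSemidef.re_trace_mul_self_le_sq (hA : A.PosSemidef) :
    RCLike.re (A * A).trace ≤ RCLike.re A.trace ^ 2 := by
  rw [hA.isHermitian.re_trace_eq_sum, hA.isHermitian.re_trace_mul_self_eq_sum]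
  exact Finset.sum_sq_le_sq_sum_of_nonneg fun i _ ↦ hA.eigenvalues_nonneg i

end Hermitian

end Matrix

theorem stmt18_general (n : ℕ) (A : Matrix (Fin n) (Fin n) ℂ) :
    let M : Matrix (Fin n ⊕ Fin n) (Fin n ⊕ Fin n) ℂ :=
      Matrix.fromBlocks A (Complex.I • A) (Complex.I • A) (-A)
    ((M * Mᴴ - Mᴴ * M) * (M * Mᴴ - Mᴴ * M)).trace =
        32 * ((Aᴴ * A) * (Aᴴ * A)).trace ∧
    (Mᴴ * M).trace = 4 * (Aᴴ * A).trace ∧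
    (A ≠ 0 →
      -2 ≤ -(((M * Mᴴ - Mᴴ * M) * (M * Mᴴ - Mᴴ * M)).trace.re) /
            ((Mᴴ * M).trace.re) ^ 2 ∧
      -(((M * Mᴴ - Mᴴ * M) * (M * Mᴴ - Mᴴ * M)).trace.re) /
            ((Mᴴ * M).trace.re) ^ 2 ≤ -2 / (n : ℝ)) := by
  intro M
  have hcomm := trace_commutator_fromBlocks_I_mul_self A
  have hnorm := trace_conjTranspose_mul_fromBlocks_I A
  refine ⟨hcomm, hnorm, fun hA ↦ ?_⟩
  have hQ := posSemidef_conjTranspose_mul_self A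
  have ht : 0 < (Aᴴ * A).trace.re := re_trace_conjTranspose_mul_self_pos hA
  have hst : (Aᴴ * A * (Aᴴ * A)).trace.re ≤ (Aᴴ * A).trace.re ^ 2 :=
    hQ.re_trace_mul_self_le_sq
  have hts : (Aᴴ * A).trace.re ^ 2 ≤ n * (Aᴴ * A * (Aᴴ * A)).trace.re := by
    simpa using hQ.isHermitian.sq_re_trace_le_card_mul
  have hn : (0 : ℝ) < n := Nat.cast_pos.mpr <| Nat.pos_of_ne_zero <| by
    rintro rfl
    exact hA (Subsingleton.elim _ _)
  rw [hcomm, hnorm]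
  simp only [Complex.mul_re, Complex.re_ofNat, Complex.im_ofNat, zero_mul, sub_zero]
  constructor
  · rw [le_div_iff₀ (by positivity)]
    nlinarith
  · rw [div_le_div_iff₀ (by positivity) hn]
    nlinarith

theorem stmt18 (n : ℕ) (hn : 1 ≤ n) (A : Matrix (Fin n) (Fin n) ℂ)
    (hsymm : Aᵀ = A) :
    let M : Matrix (Fin n ⊕ Fin n) (Fin n ⊕ Fin n) ℂ :=
      Matrix.fromBlocks A (Complex.I • A) (Complex.I • A) (-A)
    ((M * Mᴴ - Mᴴ * M) * (M * Mᴴ - Mᴴ * M)).trace =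
        32 * ((Aᴴ * A) * (Aᴴ * A)).trace ∧
    (Mᴴ * M).trace = 4 * (Aᴴ * A).trace ∧
    (A ≠ 0 →
      -2 ≤ -(((M * Mᴴ - Mᴴ * M) * (M * Mᴴ - Mᴴ * M)).trace.re) /
            ((Mᴴ * M).trace.re) ^ 2 ∧
      -(((M * Mᴴ - Mᴴ * M) * (M * Mᴴ - Mᴴ * M)).trace.re) /
            ((Mᴴ * M).trace.re) ^ 2 ≤ -2 / (n : ℝ)) :=
  stmt18_general n A
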